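/- arXiv:1205.2079 — 2 statements merged into one kernel-verified Lean document; each statement's English description precedes it below -/
import Mathlib

section
/- Let T be a finite non-abelian simple group, k ≥ 2, P a subgroup of S_k, and G := A(k,T) ⋊ P ≤ W(k,T). Let (α,…,α)π ∈ G where the permutation π has a fixed point on {1,…,k}, and let G_D denote the stabiliser in G of the coset D := D(k,T) ∈ Ω(k,T). Then the intersection of the G-conjugacy class of (α,…,α)π with G_D equals {(α',…,α')π' : α' ∈ α^{Aut(T)}, π' ∈ π^P}; in particular this intersection has cardinality |α^{Aut(T)}| · |π^P|. -/
/-!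
Common setup for groups of diagonal type, following Fawcett,
"The base size of a primitive diagonal group".
-/

namespace Diag

variable (T : Type) [Group T] (k : ℕ)

/-- The permutation action of `S_k` on `k`-tuples of automorphisms of `T`,
as a homomorphism into the automorphism group of `Fin k → MulAut T`;
this is the datum defining the wreath product `Aut(T) ≀ S_k`. -/
def permAction : Equiv.Perm (Fin k) →* MulAut (Fin k → MulAut T) where
  toFun π :=
    { toFun := fun f => f ∘ π.symm
      invFun := fun f => f ∘ π
      left_inv := fun f => by ext i; simp
      right_inv := fun f => by ext i; simp
      map_mul' := fun f g => rfl }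
  map_one' := by ext f i; rfl
  map_mul' := fun π σ => by ext f i; rfl

@[simp] lemma permAction_apply (π : Equiv.Perm (Fin k)) (f : Fin k → MulAut T) (i : Fin k) :
    permAction T k π f i = f (π.symm i) := rfl

/-- The wreath product `Aut(T) ≀_k S_k`. -/
abbrev Wr := SemidirectProduct (Fin k → MulAut T) (Equiv.Perm (Fin k)) (permAction T k)

/-- `Inn(T)`, the group of inner automorphisms, as a subgroup of `Aut(T)`. -/
def Inn : Subgroup (MulAut T) := (MulAut.conj : T →* MulAut T).range

instance : (Inn T).Normal := by
  constructor
  rintro n ⟨t, rfl⟩ g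
  refine ⟨g t, ?_⟩
  ext x
  simp [MulAut.conj_apply, map_mul, map_inv]

/-- `W(k,T) = {(α₁,…,α_k)π ∈ Aut(T) ≀ S_k : α₁Inn(T) = α_iInn(T) for all i}`. -/
def Wgrp : Subgroup (Wr T k) where
  carrier := {w | ∀ i j, (w.left i)⁻¹ * w.left j ∈ Inn T}
  one_mem' := by
    intro i j
    simp only [SemidirectProduct.one_left, Pi.one_apply, inv_one, one_mul]
    exact (Inn T).one_mem
  mul_mem' := by
    intro a b ha hb i j
    have key : ((a * b).left i)⁻¹ * (a * b).left j
        = (b.left (a.right.symm i))⁻¹ * ((a.left i)⁻¹ * a.left j) * (b.left (a.right.symm i))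
          * ((b.left (a.right.symm i))⁻¹ * b.left (a.right.symm j)) := by
      simp only [SemidirectProduct.mul_left, Pi.mul_apply, permAction_apply]
      group
    rw [key]
    exact mul_mem (Subgroup.Normal.conj_mem' (inferInstance : (Inn T).Normal) _ (ha i j) _) (hb _ _)
  inv_mem' := by
    intro a ha i j
    have key : ((a⁻¹).left i)⁻¹ * (a⁻¹).left j
        = a.left (a.right i) * ((a.left (a.right i))⁻¹ * a.left (a.right j))⁻¹
          * (a.left (a.right i))⁻¹ := by
      simp only [SemidirectProduct.inv_left, Pi.inv_apply, permAction_apply]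
      have h1 : (a.right⁻¹).symm = a.right := by ext x; rfl
      rw [h1]
      group
    rw [key]
    exact Subgroup.Normal.conj_mem (inferInstance : (Inn T).Normal) _ (inv_mem (ha _ _)) _

/-- `D(k,T) = {(α,…,α)π ∈ Aut(T) ≀ S_k}`, as a subgroup of the wreath product. -/
def Dgrp : Subgroup (Wr T k) where
  carrier := {w | ∀ i j, w.left i = w.left j}
  one_mem' := fun _ _ => rfl
  mul_mem' := by
    intro a b ha hb i j
    simp only [SemidirectProduct.mul_left, Pi.mul_apply, permAction_apply]
    rw [ha i j, hb (a.right.symm i) (a.right.symm j)]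
  inv_mem' := by
    intro a ha i j
    simp only [SemidirectProduct.inv_left, Pi.inv_apply, permAction_apply]
    rw [ha ((a.right⁻¹).symm i) ((a.right⁻¹).symm j)]

/-- `D(k,T)` viewed as a subgroup of `W(k,T)`. -/
def Dsub : Subgroup ↥(Wgrp T k) := (Dgrp T k).subgroupOf (Wgrp T k)

/-- `Ω(k,T)`, the coset space of `D(k,T)` in `W(k,T)`, on which `W(k,T)` acts
faithfully by multiplication. -/
abbrev Om := ↥(Wgrp T k) ⧸ Dsub T k

/-- For `t ∈ T`, the inner automorphism `φ_t : s ↦ t⁻¹st`. -/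
def phi (t : T) : MulAut T := MulAut.conj t⁻¹

/-- The element `(φ_{t₁},…,φ_{t_k})` of `W(k,T)` determined by a tuple `t`. -/
def innW (t : Fin k → T) : ↥(Wgrp T k) :=
  ⟨⟨fun i => phi T (t i), 1⟩, fun i j =>
    mul_mem (inv_mem (MonoidHom.mem_range.mpr ⟨(t i)⁻¹, rfl⟩))
      (MonoidHom.mem_range.mpr ⟨(t j)⁻¹, rfl⟩)⟩

/-- The point `D(φ_{t₁},…,φ_{t_k})` of `Ω(k,T)`. -/
def pointOf (t : Fin k → T) : Om T k := QuotientGroup.mk (innW T k t)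

/-- The point `D = D(k,T)` of `Ω(k,T)` (the trivial coset). -/
def pt : Om T k := QuotientGroup.mk 1

/-- The diagonal element `(α,…,α)π` of `W(k,T)`. -/
def diagElt (α : MulAut T) (π : Equiv.Perm (Fin k)) : ↥(Wgrp T k) :=
  ⟨⟨fun _ => α, π⟩, fun _ _ => by
    show α⁻¹ * α ∈ Inn T
    rw [inv_mul_cancel]; exact (Inn T).one_mem⟩

/-- The top group `P_G ≤ S_k` of a subgroup `G ≤ W(k,T)`: all permutations `π`
such that `(α₁,…,α_k)π ∈ G` for some automorphisms `α_i`. -/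
def topGroup (G : Subgroup ↥(Wgrp T k)) : Subgroup (Equiv.Perm (Fin k)) :=
  Subgroup.map ((SemidirectProduct.rightHom).comp (Wgrp T k).subtype) G

/-- The subgroup `Inn(T)^k ⋊ S_k` of `W(k,T)`: all `(α₁,…,α_k)π` with every `α_i` inner. -/
def InnSym : Subgroup ↥(Wgrp T k) where
  carrier := {w | ∀ i, (w : Wr T k).left i ∈ Inn T}
  one_mem' := fun _ => (Inn T).one_mem
  mul_mem' := by
    intro a b ha hb i
    show ((a : Wr T k) * b).left i ∈ Inn T
    rw [SemidirectProduct.mul_left]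
    simp only [Pi.mul_apply, permAction_apply]
    exact mul_mem (ha i) (hb _)
  inv_mem' := by
    intro a ha i
    show ((a : Wr T k)⁻¹).left i ∈ Inn T
    rw [SemidirectProduct.inv_left]
    simp only [Pi.inv_apply, permAction_apply]
    exact inv_mem (ha _)

/-- The socle `Inn(T)^k` (that is, `T^k`) as a subgroup of `W(k,T)`. -/
def InnK : Subgroup ↥(Wgrp T k) :=
  InnSym T k ⊓ Subgroup.comap ((SemidirectProduct.rightHom).comp (Wgrp T k).subtype) ⊥

/-- The subgroup `Inn(T)^k ⋊ A_k` of `W(k,T)`. -/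
def InnAlt : Subgroup ↥(Wgrp T k) :=
  InnSym T k ⊓ Subgroup.comap ((SemidirectProduct.rightHom).comp (Wgrp T k).subtype)
    (alternatingGroup (Fin k))

/-- The subgroup `A(k,T) ⋊ P` of `W(k,T)`, for `P ≤ S_k`: all elements of
`W(k,T)` whose permutation part lies in `P`. -/
def AP (P : Subgroup (Equiv.Perm (Fin k))) : Subgroup ↥(Wgrp T k) :=
  Subgroup.comap ((SemidirectProduct.rightHom).comp (Wgrp T k).subtype) P

/-- `B ⊆ Ω(k,T)` is a base for `G ≤ W(k,T)`: only the identity of `G`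
fixes every point of `B`. -/
def IsBase (G : Subgroup ↥(Wgrp T k)) (B : Set (Om T k)) : Prop :=
  ∀ g ∈ G, (∀ ω ∈ B, g • ω = ω) → g = 1

/-- `b(G)`: the minimal size of a base for `G` acting on `Ω(k,T)`. -/
noncomputable def baseSize (G : Subgroup ↥(Wgrp T k)) : ℕ :=
  sInf {n | ∃ B : Finset (Om T k), B.card = n ∧ IsBase T k G ↑B}

/-- `G ≤ W(k,T)` acts primitively on `Ω(k,T)`: the action is transitive and
every block is trivial. -/
def IsPrimitive (G : Subgroup ↥(Wgrp T k)) : Prop :=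
  (∀ ω₁ ω₂ : Om T k, ∃ g ∈ G, g • ω₁ = ω₂) ∧
  ∀ B : Set (Om T k),
    (∀ g ∈ G, (g • ·) '' B = B ∨ Disjoint ((g • ·) '' B) B) →
    B.Subsingleton ∨ B = Set.univ

/-- `G` is a group of diagonal type with socle `T^k`:
`Inn(T)^k ≤ G ≤ W(k,T)` and `G` acts primitively on `Ω(k,T)`. -/
def IsDiagonalType (G : Subgroup ↥(Wgrp T k)) : Prop :=
  InnK T k ≤ G ∧ IsPrimitive T k G

/-- A subgroup `P ≤ S_k` is primitive in its natural action on `{1,…,k}`: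
the action is transitive and every block is trivial. -/
def PermPrimitive (P : Subgroup (Equiv.Perm (Fin k))) : Prop :=
  (∀ i j : Fin k, ∃ π ∈ P, π i = j) ∧
  ∀ B : Set (Fin k),
    (∀ π ∈ P, (π : Fin k → Fin k) '' B = B ∨ Disjoint ((π : Fin k → Fin k) '' B) B) →
    B.Subsingleton ∨ B = Set.univ

end Diag

open Diag

section Aux

variable (T : Type) [Group T] (k : ℕ)

@[simp] lemma permAction_inv_apply (π : Equiv.Perm (Fin k)) (f : Fin k → MulAut T) (i : Fin k) :
    ((permAction T k π)⁻¹ : MulAut (Fin k → MulAut T)) f i = f (π i) := rfl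

lemma key_conj (w : Wr T k) (α : MulAut T) (π : Equiv.Perm (Fin k)) :
    w⁻¹ * ⟨fun _ => α, π⟩ * w =
      ⟨fun i => (w.left (w.right i))⁻¹ * α * w.left (π⁻¹ (w.right i)),
       w.right⁻¹ * π * w.right⟩ := by
  ext i
  · simp [SemidirectProduct.mul_left, SemidirectProduct.inv_left, Equiv.Perm.inv_def, mul_assoc]
  · simp [SemidirectProduct.mul_right, SemidirectProduct.inv_right]

lemma smul_pt_iff (g : ↥(Wgrp T k)) :
    g • pt T k = pt T k ↔ ∀ i j, (g : Wr T k).left i = (g : Wr T k).left j := by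
  have h1 : g • pt T k = QuotientGroup.mk g := by
    show QuotientGroup.mk (g * 1) = _
    rw [mul_one]
  rw [h1, pt, QuotientGroup.eq]
  constructor
  · intro h i j
    have := (inv_mem_iff.mp h :)
    exact this i j
  · intro h
    exact inv_mem (by exact h : g.1 ∈ Dgrp T k)

lemma diagElt_coe (α : MulAut T) (π : Equiv.Perm (Fin k)) :
    (diagElt T k α π : Wr T k) = ⟨fun _ => α, π⟩ := rfl

end Aux


/-- **Lemma (conjugacy classes meeting the stabiliser of `D`).** Let `P ≤ S_k`,
`G = A(k,T) ⋊ P`, and let `(α,…,α)π ∈ G` where `π` has a fixed point.  Then the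
intersection of the `G`-conjugacy class of `(α,…,α)π` with `G_D` is
`{(α',…,α')π' : α' ∈ α^{Aut(T)}, π' ∈ π^P}`; in particular it has cardinality
`|α^{Aut(T)}|·|π^P|`. -/
theorem conj_class_inter_stabilizer
    (T : Type) [Group T] [Fintype T] [IsSimpleGroup T]
    (hab : ∃ a b : T, a * b ≠ b * a)
    (k : ℕ) (hk : 2 ≤ k)
    (P : Subgroup (Equiv.Perm (Fin k)))
    (α : MulAut T) (π : Equiv.Perm (Fin k)) (hπ : π ∈ P)
    (hfp : ∃ i, π i = i) :
    {g : ↥(Wgrp T k) | (∃ h ∈ AP T k P, h⁻¹ * diagElt T k α π * h = g) ∧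
        g ∈ AP T k P ∧ g • pt T k = pt T k} =
      {g : ↥(Wgrp T k) | ∃ (α' : MulAut T) (π' : Equiv.Perm (Fin k)),
        (∃ β : MulAut T, β⁻¹ * α * β = α') ∧ (∃ σ ∈ P, σ⁻¹ * π * σ = π') ∧
        g = diagElt T k α' π'} ∧
    Nat.card {g : ↥(Wgrp T k) // (∃ h ∈ AP T k P, h⁻¹ * diagElt T k α π * h = g) ∧
        g ∈ AP T k P ∧ g • pt T k = pt T k} =
      Nat.card {α' : MulAut T // ∃ β : MulAut T, β⁻¹ * α * β = α'} *
      Nat.card {π' : Equiv.Perm (Fin k) // ∃ σ ∈ P, σ⁻¹ * π * σ = π'} := by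
  obtain ⟨i₀, hi₀⟩ := hfp
  have hπinv : π⁻¹ i₀ = i₀ := by conv_lhs => rw [← hi₀]; simp
  have hset : {g : ↥(Wgrp T k) | (∃ h ∈ AP T k P, h⁻¹ * diagElt T k α π * h = g) ∧
        g ∈ AP T k P ∧ g • pt T k = pt T k} =
      {g : ↥(Wgrp T k) | ∃ (α' : MulAut T) (π' : Equiv.Perm (Fin k)),
        (∃ β : MulAut T, β⁻¹ * α * β = α') ∧ (∃ σ ∈ P, σ⁻¹ * π * σ = π') ∧
        g = diagElt T k α' π'} := by
    ext g
    simp only [Set.mem_setOf_eq]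
    constructor
    · rintro ⟨⟨h, hh, hconj⟩, hgP, hgpt⟩
      have hD := (smul_pt_iff T k g).mp hgpt
      set w : Wr T k := (h : Wr T k) with hw
      have hcoe : (g : Wr T k) = w⁻¹ * ⟨fun _ => α, π⟩ * w := by
        rw [← hconj]; push_cast [diagElt_coe]; rfl
      rw [key_conj] at hcoe
      refine ⟨(w.left i₀)⁻¹ * α * w.left i₀, w.right⁻¹ * π * w.right,
        ⟨w.left i₀, rfl⟩, ⟨w.right, hh, rfl⟩, ?_⟩
      have hleft : ∀ j, (g : Wr T k).left j = (w.left i₀)⁻¹ * α * w.left i₀ := by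
        intro j
        rw [hD j (w.right⁻¹ i₀), hcoe]
        simp [hπinv]
      have hright : (g : Wr T k).right = w.right⁻¹ * π * w.right := by rw [hcoe]
      apply Subtype.ext
      rw [diagElt_coe]
      exact SemidirectProduct.ext (funext fun j => hleft j) hright
    · rintro ⟨α', π', ⟨β, hβ⟩, ⟨σ, hσ, hσπ⟩, rfl⟩
      have hπ'P : π' ∈ P := by rw [← hσπ]; exact mul_mem (mul_mem (inv_mem hσ) hπ) hσ
      refine ⟨⟨diagElt T k β σ, hσ, ?_⟩, hπ'P, ?_⟩
      · apply Subtype.ext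
        push_cast [diagElt_coe]
        rw [key_conj]
        exact SemidirectProduct.ext (funext fun j => by simp [← hβ]) hσπ
      · rw [smul_pt_iff]
        intro i j
        rfl
  refine ⟨hset, ?_⟩
  have hmem := Set.ext_iff.mp hset
  simp only [Set.mem_setOf_eq] at hmem
  rw [← Nat.card_prod]
  apply Nat.card_congr
  have i1 : Fin k := ⟨0, by omega⟩
  let f : ({α' : MulAut T // ∃ β : MulAut T, β⁻¹ * α * β = α'} ×
      {π' : Equiv.Perm (Fin k) // ∃ σ ∈ P, σ⁻¹ * π * σ = π'}) →
      {g : ↥(Wgrp T k) // (∃ h ∈ AP T k P, h⁻¹ * diagElt T k α π * h = g) ∧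
        g ∈ AP T k P ∧ g • pt T k = pt T k} :=
    fun p => ⟨diagElt T k p.1.1 p.2.1, (hmem _).mpr ⟨p.1.1, p.2.1, p.1.2, p.2.2, rfl⟩⟩
  refine (Equiv.ofBijective f ⟨?_, ?_⟩).symm
  · rintro ⟨⟨a, ha⟩, ⟨b, hb⟩⟩ ⟨⟨c, hc⟩, ⟨d, hd⟩⟩ hfe
    have h1 : diagElt T k a b = diagElt T k c d := congrArg Subtype.val hfe
    have h2 : (diagElt T k a b : Wr T k) = (diagElt T k c d : Wr T k) :=
      congrArg Subtype.val h1
    have hac : a = c := congrFun (congrArg SemidirectProduct.left h2) i1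
    have hbd : b = d := congrArg SemidirectProduct.right h2
    simp [hac, hbd]
  · rintro ⟨g, hg⟩
    obtain ⟨α', π', h1, h2, hdiag⟩ := (hmem g).mp hg
    exact ⟨(⟨α', h1⟩, ⟨π', h2⟩), Subtype.ext hdiag.symm⟩
end

section
/- Let T be a finite non-abelian simple group, k ≥ 2, P a subgroup of S_k, and G := A(k,T) ⋊ P ≤ W(k,T). Let (α,…,α)π be an element of G of prime order p. If π is fixed-point-free on {1,…,k}, then |C_G((α,…,α)π)| = |C_P(π)| · |C_{Out(T)}(ᾱ)| · |T|^{k/p}, where ᾱ denotes the image of α in Out(T). If π has a fixed point on {1,…,k} and f denotes the number of fixed points of π, then |C_G((α,…,α)π)| = |C_P(π)| · |C_{Aut(T)}(α)| · |C_{Inn(T)}(α)|^{f−1} · |T|^{(k−f)/p}. -/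
open Diag

/-!
An element `(β₁,…,β_k)σ` of `W(k,T)` commutes with `(α,…,α)π` exactly when `σ` commutes with `π`
and `β (π i) = α β(i) α⁻¹` for all `i`; so the centraliser is `C_P(π)` times the set of such
tuples `β` with all entries in one `Inn(T)`-coset `c`, and `c` then commutes with `ᾱ`.
For a fixed coset `c`, such a `β` is the same as a free choice of one value in `c` on each
`p`-cycle of `π` (consistent because `α ^ p = 1`) and one value in `c ∩ C_{Aut(T)}(α)` at each
fixed point. The latter set is empty or a translate of `C_{Inn(T)}(α)`, and summing over the cosets
`c` gives `|C_{Out(T)}(ᾱ)|` if `π` is fixed-point-free and `|C_{Aut(T)}(α)|·|C_{Inn(T)}(α)|^{f-1}`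
otherwise.
-/

open Function MulAction Subgroup

theorem Function.iterate_eq_iterate_of_isPeriodicPt {α β : Type*} {f : α → α} {g : β → β}
    {x : α} {y : β} (hx : x ∈ periodicPts f) (hy : IsPeriodicPt g (minimalPeriod f x) y)
    {m n : ℕ} (h : f^[m] x = f^[n] x) : g^[m] y = g^[n] y := by
  have hpos := minimalPeriod_pos_of_mem_periodicPts hx
  have hmod : m % minimalPeriod f x = n % minimalPeriod f x := by
    rwa [← iterate_eq_iterate_iff_of_lt_minimalPeriod (Nat.mod_lt _ hpos) (Nat.mod_lt _ hpos),
      iterate_mod_minimalPeriod_eq, iterate_mod_minimalPeriod_eq]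
  rw [← hy.iterate_mod_apply, hmod, hy.iterate_mod_apply]

theorem MulAut.iterate_conj {A : Type*} [Group A] (α : A) (n : ℕ) :
    (⇑(MulAut.conj α))^[n] = ⇑(MulAut.conj (α ^ n)) := by
  induction n with
  | zero => ext; simp
  | succ n ih => rw [iterate_succ', ih, pow_succ', map_mul]; rfl

theorem IsSimpleGroup.center_eq_bot {T : Type*} [Group T] [IsSimpleGroup T]
    (h : ∃ a b : T, a * b ≠ b * a) : center T = ⊥ := by
  refine (IsSimpleGroup.eq_bot_or_eq_top_of_normal _ inferInstance).resolve_right fun htop => ?_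
  obtain ⟨a, b, hab⟩ := h
  exact hab (mem_center_iff.mp (htop ▸ mem_top b) a)

namespace Equiv.Perm

variable {ι X : Type*} (π : Perm ι)

abbrev Orbits := orbitRel.Quotient (zpowers π) ι

theorem mk_apply_eq_mk (i : ι) : (Quotient.mk'' (π i) : π.Orbits) = Quotient.mk'' i :=
  Quotient.sound (mem_orbit i (⟨π, mem_zpowers π⟩ : zpowers π))

variable [Finite ι]

theorem mem_periodicPts (i : ι) : i ∈ periodicPts π :=
  ⟨orderOf π, orderOf_pos π, by
    rw [IsPeriodicPt, IsFixedPt, ← coe_pow, pow_orderOf_eq_one, one_apply]⟩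

theorem exists_iterate_out_eq (i : ι) : ∃ n : ℕ, π^[n] (Quotient.mk'' i : π.Orbits).out = i := by
  obtain ⟨⟨g, hg⟩, hgi⟩ := mem_orbit_symm.mp (Quotient.mk_out' (s₁ := orbitRel (zpowers π) ι) i)
  obtain ⟨n, rfl⟩ := mem_powers_iff_mem_zpowers.mpr hg
  exact ⟨n, by rw [← coe_pow]; exact hgi⟩

noncomputable def orbitExponent (i : ι) : ℕ := (π.exists_iterate_out_eq i).choose

theorem iterate_orbitExponent (i : ι) :
    π^[π.orbitExponent i] (Quotient.mk'' i : π.Orbits).out = i :=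
  (π.exists_iterate_out_eq i).choose_spec

theorem out_mk_of_isFixedPt {i : ι} (hi : π i = i) : (Quotient.mk'' i : π.Orbits).out = i :=
  π.injective.iterate _ ((π.iterate_orbitExponent i).trans (iterate_fixed hi _).symm)

variable (f : X → X)

noncomputable def semiconjEquivPi :
    {β : ι → X // Semiconj β π f} ≃
      Π q : π.Orbits, {x : X // IsPeriodicPt f (minimalPeriod π q.out) x} where
  toFun β q := ⟨β.1 q.out, by
    rw [IsPeriodicPt, IsFixedPt, ← (β.2.iterate_right _).eq, iterate_minimalPeriod]⟩
  invFun x := ⟨fun i => f^[π.orbitExponent i] (x (Quotient.mk'' i)), fun i => by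
    dsimp only
    rw [← iterate_succ_apply' f, mk_apply_eq_mk]
    refine iterate_eq_iterate_of_isPeriodicPt (π.mem_periodicPts _) (x _).2 ?_
    rw [iterate_succ_apply', iterate_orbitExponent, ← mk_apply_eq_mk, iterate_orbitExponent]⟩
  left_inv β := by
    ext i
    dsimp only
    rw [← (β.2.iterate_right _).eq, iterate_orbitExponent]
  right_inv x := by
    ext q
    dsimp only
    have h := π.iterate_orbitExponent q.out
    rw [Quotient.out_eq'] at h ⊢
    exact iterate_eq_iterate_of_isPeriodicPt (n := 0) (π.mem_periodicPts _) (x q).2 h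

theorem card_eq_sum_minimalPeriod [Fintype π.Orbits] :
    Nat.card ι = ∑ q : π.Orbits, minimalPeriod π q.out := by
  classical
  have := Fintype.ofFinite ι
  rw [Nat.card_congr (selfEquivSigmaOrbits (zpowers π) ι), Nat.card_sigma]
  refine Finset.sum_congr rfl fun q _ => ?_
  rw [Nat.card_eq_fintype_card, ← minimalPeriod_eq_card]
  rfl

theorem card_orbits_minimalPeriod_eq_one :
    Nat.card {q : π.Orbits // minimalPeriod π q.out = 1} = Nat.card {i : ι // π i = i} :=
  Nat.card_congr
    { toFun := fun q => ⟨q.1.out, minimalPeriod_eq_one_iff_isFixedPt.mp q.2⟩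
      invFun := fun i => ⟨Quotient.mk'' i.1, by
        rw [out_mk_of_isFixedPt π i.2]; exact minimalPeriod_eq_one_iff_isFixedPt.mpr i.2⟩
      left_inv := fun q => Subtype.ext (Quotient.out_eq' q.1)
      right_inv := fun i => Subtype.ext (out_mk_of_isFixedPt π i.2) }

theorem card_semiconj_of_pow_eq_one {p : ℕ} (hp : p.Prime) (hπ : π ^ p = 1)
    (hf : ∀ x, f^[p] x = x) :
    Nat.card {β : ι → X // Semiconj β π f} =
      Nat.card {x // f x = x} ^ Nat.card {i : ι // π i = i} *
        Nat.card X ^ ((Nat.card ι - Nat.card {i : ι // π i = i}) / p) := by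
  classical
  have := Fintype.ofFinite π.Orbits
  have hper (q : π.Orbits) : minimalPeriod π q.out = 1 ∨ minimalPeriod π q.out = p := by
    refine hp.eq_one_or_self_of_dvd _ (IsPeriodicPt.minimalPeriod_dvd ?_)
    rw [IsPeriodicPt, IsFixedPt, ← coe_pow, hπ, one_apply]
  have hcard (q : π.Orbits) : Nat.card {x // IsPeriodicPt f (minimalPeriod π q.out) x} =
      if minimalPeriod π q.out = 1 then Nat.card {x // f x = x} else Nat.card X := by
    split_ifs with h
    · rw [h]; rfl
    · rw [(hper q).resolve_left h]
      exact Nat.card_congr (Equiv.subtypeUnivEquiv hf)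
  have hfix := π.card_orbits_minimalPeriod_eq_one
  rw [Nat.card_eq_fintype_card, Fintype.card_subtype] at hfix
  have hsum : Nat.card ι = Nat.card {i : ι // π i = i} +
      (Finset.univ.filter fun q : π.Orbits => minimalPeriod π q.out ≠ 1).card * p := by
    rw [π.card_eq_sum_minimalPeriod, ← Finset.sum_filter_add_sum_filter_not _
        (fun q => minimalPeriod π q.out = 1),
      Finset.sum_const_nat fun q hq => (Finset.mem_filter.mp hq).2,
      Finset.sum_const_nat fun q hq => (hper q).resolve_left (Finset.mem_filter.mp hq).2,
      mul_one, hfix]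
  rw [Nat.card_congr (semiconjEquivPi π f), Nat.card_pi, Finset.prod_congr rfl fun q _ => hcard q,
    Finset.prod_ite, Finset.prod_const, Finset.prod_const, hfix, hsum, Nat.add_sub_cancel_left,
    Nat.mul_div_cancel _ hp.pos]

end Equiv.Perm

namespace QuotientGroup

variable {A : Type*} [Group A] {N : Subgroup A} {α : A}

theorem card_centralizer_coset {y : A} (hy : Commute y α) :
    Nat.card {a : A // (a : A ⧸ N) = y ∧ Commute a α} =
      Nat.card {n : A // n ∈ N ∧ Commute n α} :=
  Nat.card_congr
    { toFun := fun a => ⟨y⁻¹ * a, QuotientGroup.eq.mp a.2.1.symm, hy.inv_left.mul_left a.2.2⟩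
      invFun := fun n => ⟨y * n,
        (QuotientGroup.eq.mpr (by rw [inv_mul_cancel_left]; exact n.2.1)).symm, hy.mul_left n.2.2⟩
      left_inv := fun a => Subtype.ext (mul_inv_cancel_left y a)
      right_inv := fun n => Subtype.ext (inv_mul_cancel_left y n) }

variable [N.Normal]

theorem mapsTo_conj_preimage_mk {c : A ⧸ N} (hc : Commute c α) :
    Set.MapsTo (MulAut.conj α) (mk ⁻¹' {c}) (mk ⁻¹' {c}) := by
  intro a ha
  rw [Set.mem_preimage, Set.mem_singleton_iff] at ha ⊢
  rw [MulAut.conj_apply, mk_mul, mk_mul, mk_inv, ha, ← hc.eq, mul_inv_cancel_right]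

theorem card_fixedPoints_conj_preimage_mk {c : A ⧸ N} (hc : Commute c α) :
    Nat.card {x : mk ⁻¹' {c} // Set.MapsTo.restrict _ _ _ (mapsTo_conj_preimage_mk hc) x = x} =
      Nat.card {a : A // (a : A ⧸ N) = c ∧ Commute a α} :=
  Nat.card_congr
    { toFun := fun x => ⟨x.1.1, x.1.2, by
        have h := congrArg Subtype.val x.2
        rw [Set.MapsTo.val_restrict_apply, MulAut.conj_apply, mul_inv_eq_iff_eq_mul] at h
        exact h.symm⟩
      invFun := fun a => ⟨⟨a.1, a.2.1⟩, Subtype.ext <| by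
        rw [Set.MapsTo.val_restrict_apply, MulAut.conj_apply, a.2.2.symm.eq, mul_inv_cancel_right]⟩
      left_inv := fun _ => rfl
      right_inv := fun _ => rfl }

variable [Finite A] [Fintype {c : A ⧸ N // Commute c α}]

theorem sum_card_centralizer_coset :
    ∑ c : {c : A ⧸ N // Commute c α}, Nat.card {a : A // (a : A ⧸ N) = c ∧ Commute a α} =
      Nat.card {a : A // Commute a α} := by
  let g (a : {a : A // Commute a α}) : {c : A ⧸ N // Commute c α} :=
    ⟨a.1, a.2.map (QuotientGroup.mk' N)⟩
  rw [← Nat.card_congr (Equiv.sigmaFiberEquiv g), Nat.card_sigma]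
  exact Finset.sum_congr rfl fun c _ => Nat.card_congr
    { toFun := fun a => ⟨⟨a.1, a.2.2⟩, Subtype.ext a.2.1⟩
      invFun := fun a => ⟨a.1.1, congrArg Subtype.val a.2, a.1.2⟩
      left_inv := fun _ => rfl
      right_inv := fun _ => rfl }

theorem sum_pow_card_centralizer_coset {F : ℕ} (hF : F ≠ 0) :
    ∑ c : {c : A ⧸ N // Commute c α}, Nat.card {a : A // (a : A ⧸ N) = c ∧ Commute a α} ^ F =
      Nat.card {a : A // Commute a α} * Nat.card {n : A // n ∈ N ∧ Commute n α} ^ (F - 1) := by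
  rw [← sum_card_centralizer_coset (N := N), Finset.sum_mul]
  refine Finset.sum_congr rfl fun c _ => ?_
  rcases eq_or_ne (Nat.card {a : A // (a : A ⧸ N) = c ∧ Commute a α}) 0 with h | h
  · rw [h, zero_pow hF, zero_mul]
  · obtain ⟨⟨y, hyc, hy⟩⟩ := (Nat.card_ne_zero.mp h).1
    rw [← hyc, card_centralizer_coset hy, ← pow_succ', Nat.sub_one_add_one hF]

end QuotientGroup

section TwistedTuples

open QuotientGroup

variable {ι A : Type*} [Group A] (N : Subgroup A) (α : A) (π : Equiv.Perm ι)

/-- For `N = Inn(T)` these are the base parts of the elements of `W(k,T)` centralising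
`(α,…,α)π`. -/
abbrev TwistedTuples := {β : ι → A // (∀ i j, (β i)⁻¹ * β j ∈ N) ∧ Semiconj β π (MulAut.conj α)}

variable {N α π}

theorem commute_mk_of_mem_twistedTuples [N.Normal] (β : TwistedTuples N α π) (i : ι) :
    Commute (β.1 i : A ⧸ N) α := by
  have h := (QuotientGroup.eq.mpr (β.2.1 i (π i))).symm
  rw [β.2.2.eq, MulAut.conj_apply, mk_mul, mk_mul, mk_inv, mul_inv_eq_iff_eq_mul] at h
  exact h.symm

variable [N.Normal] [Finite ι] [Finite A] {p : ℕ}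

theorem card_twistedTuples_eq_sum [Nonempty ι] [Fintype {c : A ⧸ N // Commute c α}]
    (hp : p.Prime) (hπ : π ^ p = 1) (hα : α ^ p = 1) :
    Nat.card (TwistedTuples N α π) =
      (∑ c : {c : A ⧸ N // Commute c α},
        Nat.card {a : A // (a : A ⧸ N) = c ∧ Commute a α} ^ Nat.card {i : ι // π i = i}) *
        Nat.card N ^ ((Nat.card ι - Nat.card {i : ι // π i = i}) / p) := by
  obtain ⟨i₀⟩ := ‹Nonempty ι›
  -- the tuples with common coset `c` are the semiconjugacies from `π` to `α`-conjugation on `c`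
  let g (β : TwistedTuples N α π) : {c : A ⧸ N // Commute c α} :=
    ⟨β.1 i₀, commute_mk_of_mem_twistedTuples β i₀⟩
  rw [← Nat.card_congr (Equiv.sigmaFiberEquiv g), Nat.card_sigma, Finset.sum_mul]
  refine Finset.sum_congr rfl fun c _ => ?_
  have hf (x : mk ⁻¹' {c.1}) :
      (Set.MapsTo.restrict _ _ _ (mapsTo_conj_preimage_mk c.2))^[p] x = x := by
    ext
    rw [Set.MapsTo.iterate_restrict, Set.MapsTo.val_restrict_apply, MulAut.iterate_conj, hα,
      map_one, MulAut.one_apply]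
  rw [← card_fixedPoints_conj_preimage_mk c.2, ← mul_one (Nat.card N),
    ← Nat.card_unique (α := ({c.1} : Set (A ⧸ N))), ← card_preimage_mk,
    ← Equiv.Perm.card_semiconj_of_pow_eq_one π _ hp hπ hf]
  exact Nat.card_congr
    { toFun := fun β => ⟨fun i => ⟨β.1.1 i,
          (QuotientGroup.eq.mpr (β.1.2.1 i₀ i)).symm.trans (congrArg Subtype.val β.2)⟩,
        fun i => Subtype.ext (β.1.2.2 i)⟩
      invFun := fun β => ⟨⟨fun i => β.1 i,
          fun i j => QuotientGroup.eq.mp ((β.1 i).2.trans (β.1 j).2.symm),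
          fun i => congrArg Subtype.val (β.2 i)⟩, Subtype.ext (β.1 i₀).2⟩
      left_inv := fun _ => rfl
      right_inv := fun _ => rfl }

theorem card_twistedTuples_of_forall_ne [Nonempty ι] (hp : p.Prime) (hπ : π ^ p = 1)
    (hα : α ^ p = 1) (hfree : ∀ i, π i ≠ i) :
    Nat.card (TwistedTuples N α π) =
      Nat.card {c : A ⧸ N // Commute c α} * Nat.card N ^ (Nat.card ι / p) := by
  have := Fintype.ofFinite {c : A ⧸ N // Commute c α}
  have : IsEmpty {i : ι // π i = i} := ⟨fun i => hfree i.1 i.2⟩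
  rw [card_twistedTuples_eq_sum hp hπ hα, Nat.card_of_isEmpty, Nat.sub_zero]
  simp only [pow_zero, Finset.sum_const, Finset.card_univ, smul_eq_mul, mul_one,
    Nat.card_eq_fintype_card]

theorem card_twistedTuples_of_exists_eq (hp : p.Prime) (hπ : π ^ p = 1) (hα : α ^ p = 1)
    (hfix : ∃ i, π i = i) :
    Nat.card (TwistedTuples N α π) =
      Nat.card {a : A // Commute a α} *
        Nat.card {n : A // n ∈ N ∧ Commute n α} ^ (Nat.card {i : ι // π i = i} - 1) *
        Nat.card N ^ ((Nat.card ι - Nat.card {i : ι // π i = i}) / p) := by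
  have := Fintype.ofFinite {c : A ⧸ N // Commute c α}
  obtain ⟨i, hi⟩ := hfix
  have : Nonempty ι := ⟨i⟩
  have hF : Nat.card {i : ι // π i = i} ≠ 0 := Nat.card_ne_zero.mpr ⟨⟨⟨i, hi⟩⟩, inferInstance⟩
  rw [card_twistedTuples_eq_sum hp hπ hα, sum_pow_card_centralizer_coset hF]

end TwistedTuples

namespace Diag

variable {T : Type} [Group T] {k : ℕ}

theorem card_Inn (hT : center T = ⊥) : Nat.card (Inn T) = Nat.card T := by
  refine (Nat.card_congr (MonoidHom.ofInjective (f := MulAut.conj) ?_).toEquiv).symm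
  refine (injective_iff_map_eq_one _).mpr fun a ha => ?_
  have hcenter : a ∈ center T := mem_center_iff.mpr fun x => by
    have hx := DFunLike.congr_fun ha x
    rw [MulAut.conj_apply, MulAut.one_apply, mul_inv_eq_iff_eq_mul] at hx
    exact hx.symm
  rwa [hT, mem_bot] at hcenter

theorem diagElt_mul (α β : MulAut T) (σ τ : Equiv.Perm (Fin k)) :
    diagElt T k α σ * diagElt T k β τ = diagElt T k (α * β) (σ * τ) := rfl

theorem diagElt_pow (α : MulAut T) (π : Equiv.Perm (Fin k)) (n : ℕ) :
    diagElt T k α π ^ n = diagElt T k (α ^ n) (π ^ n) := by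
  induction n with
  | zero => rfl
  | succ n ih => rw [pow_succ, ih, diagElt_mul, ← pow_succ, ← pow_succ]

theorem diagElt_eq_one_iff [NeZero k] {α : MulAut T} {π : Equiv.Perm (Fin k)} :
    diagElt T k α π = 1 ↔ α = 1 ∧ π = 1 := by
  refine ⟨fun h => ⟨congrFun (congrArg (fun g : Wgrp T k => (g : Wr T k).left) h) 0,
    congrArg (fun g : Wgrp T k => (g : Wr T k).right) h⟩, ?_⟩
  rintro ⟨rfl, rfl⟩
  rfl

theorem commute_diagElt_iff (α : MulAut T) (π : Equiv.Perm (Fin k)) (g : Wgrp T k) :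
    g * diagElt T k α π = diagElt T k α π * g ↔
      (g : Wr T k).right * π = π * (g : Wr T k).right ∧
        Semiconj (g : Wr T k).left π (MulAut.conj α) := by
  rw [Subtype.ext_iff, SemidirectProduct.ext_iff, and_comm, funext_iff]
  refine and_congr_right' ⟨fun h i => ?_, fun h i => ?_⟩
  · have hi : g.1.left (π i) * α = α * g.1.left i := by simpa [diagElt] using h (π i)
    rw [MulAut.conj_apply, ← hi, mul_inv_cancel_right]
  · have hi := h.eq (π.symm i)
    rw [π.apply_symm_apply] at hi
    simp only [diagElt, coe_mul, SemidirectProduct.mul_left, Pi.mul_apply, permAction_apply]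
    rw [hi, MulAut.conj_apply, inv_mul_cancel_right]

theorem card_centralizer_diagElt (P : Subgroup (Equiv.Perm (Fin k))) (α : MulAut T)
    (π : Equiv.Perm (Fin k)) :
    Nat.card {g : Wgrp T k // g ∈ AP T k P ∧ g * diagElt T k α π = diagElt T k α π * g} =
      Nat.card {σ : Equiv.Perm (Fin k) // σ ∈ P ∧ σ * π = π * σ} *
        Nat.card (TwistedTuples (Inn T) α π) := by
  rw [← Nat.card_prod]
  exact Nat.card_congr
    { toFun := fun g =>
        (⟨(g.1 : Wr T k).right, g.2.1, ((commute_diagElt_iff α π g.1).mp g.2.2).1⟩,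
          ⟨(g.1 : Wr T k).left, g.1.2, ((commute_diagElt_iff α π g.1).mp g.2.2).2⟩)
      invFun := fun x => ⟨⟨⟨x.2.1, x.1.1⟩, x.2.2.1⟩, x.1.2.1,
        (commute_diagElt_iff α π _).mpr ⟨x.1.2.2, x.2.2.2⟩⟩
      left_inv := fun _ => rfl
      right_inv := fun _ => rfl }

end Diag

theorem centralizer_order_diag_general
    (T : Type) [Group T] [Fintype T] [IsSimpleGroup T]
    (hab : ∃ a b : T, a * b ≠ b * a)
    (k : ℕ) (hk : 2 ≤ k)
    (P : Subgroup (Equiv.Perm (Fin k)))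
    (α : MulAut T) (π : Equiv.Perm (Fin k))
    (p : ℕ) (hp : p.Prime) (hord : orderOf (diagElt T k α π) = p) :
    ((∀ i, π i ≠ i) →
      Nat.card {g : ↥(Wgrp T k) //
          g ∈ AP T k P ∧ g * diagElt T k α π = diagElt T k α π * g} =
        Nat.card {σ : Equiv.Perm (Fin k) // σ ∈ P ∧ σ * π = π * σ} *
        Nat.card {β : MulAut T ⧸ Inn T //
          β * (QuotientGroup.mk α) = (QuotientGroup.mk α) * β} *
        Fintype.card T ^ (k / p)) ∧
    ((∃ i, π i = i) →
      Nat.card {g : ↥(Wgrp T k) //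
          g ∈ AP T k P ∧ g * diagElt T k α π = diagElt T k α π * g} =
        Nat.card {σ : Equiv.Perm (Fin k) // σ ∈ P ∧ σ * π = π * σ} *
        Nat.card {β : MulAut T // β * α = α * β} *
        Nat.card {β : MulAut T // β ∈ Inn T ∧ β * α = α * β} ^
          (Nat.card {i : Fin k // π i = i} - 1) *
        Fintype.card T ^ ((k - Nat.card {i : Fin k // π i = i}) / p)) := by
  have : NeZero k := ⟨by omega⟩
  obtain ⟨hα, hπ⟩ := (diagElt_eq_one_iff (α := α ^ p) (π := π ^ p)).mp <| by
    rw [← diagElt_pow, ← hord, pow_orderOf_eq_one]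
  have hInn : Nat.card (Inn T) = Fintype.card T := by
    rw [card_Inn (IsSimpleGroup.center_eq_bot hab), Nat.card_eq_fintype_card]
  rw [card_centralizer_diagElt]
  refine ⟨fun hfree => ?_, fun hfix => ?_⟩
  · rw [card_twistedTuples_of_forall_ne hp hπ hα hfree, hInn, Nat.card_fin, mul_assoc]
    rfl
  · rw [card_twistedTuples_of_exists_eq hp hπ hα hfix, hInn, Nat.card_fin, mul_assoc, mul_assoc,
      mul_assoc]
    rfl

/-- **Lemma (centraliser orders).** Let `P ≤ S_k`, `G = A(k,T) ⋊ P`, and let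
`(α,…,α)π ∈ G` have prime order `p`.  If `π` is fixed-point-free then
`|C_G((α,…,α)π)| = |C_P(π)|·|C_{Out(T)}(ᾱ)|·|T|^{k/p}`; if `π` has a fixed point and
`f` is its number of fixed points, then
`|C_G((α,…,α)π)| = |C_P(π)|·|C_{Aut(T)}(α)|·|C_{Inn(T)}(α)|^{f-1}·|T|^{(k-f)/p}`. -/
theorem centralizer_order_diag
    (T : Type) [Group T] [Fintype T] [IsSimpleGroup T]
    (hab : ∃ a b : T, a * b ≠ b * a)
    (k : ℕ) (hk : 2 ≤ k)
    (P : Subgroup (Equiv.Perm (Fin k)))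
    (α : MulAut T) (π : Equiv.Perm (Fin k)) (hπ : π ∈ P)
    (p : ℕ) (hp : p.Prime) (hord : orderOf (diagElt T k α π) = p) :
    ((∀ i, π i ≠ i) →
      Nat.card {g : ↥(Wgrp T k) //
          g ∈ AP T k P ∧ g * diagElt T k α π = diagElt T k α π * g} =
        Nat.card {σ : Equiv.Perm (Fin k) // σ ∈ P ∧ σ * π = π * σ} *
        Nat.card {β : MulAut T ⧸ Inn T //
          β * (QuotientGroup.mk α) = (QuotientGroup.mk α) * β} *
        Fintype.card T ^ (k / p)) ∧
    ((∃ i, π i = i) →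
      Nat.card {g : ↥(Wgrp T k) //
          g ∈ AP T k P ∧ g * diagElt T k α π = diagElt T k α π * g} =
        Nat.card {σ : Equiv.Perm (Fin k) // σ ∈ P ∧ σ * π = π * σ} *
        Nat.card {β : MulAut T // β * α = α * β} *
        Nat.card {β : MulAut T // β ∈ Inn T ∧ β * α = α * β} ^
          (Nat.card {i : Fin k // π i = i} - 1) *
        Fintype.card T ^ ((k - Nat.card {i : Fin k // π i = i}) / p)) :=
  centralizer_order_diag_general T hab k hk P α π p hp hord
end
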